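/- Let M be a set equipped with a binary relation R, and let R* denote the reflexive-transitive closure of R. A map G : Set M × Set M → Set M restricts to descendants if for every s ∈ M and all X, Y ⊆ M: s ∈ G(X, Y) iff s ∈ G(X ∩ R*[s], Y ∩ R*[s]), where R*[s] = {t : (s,t) ∈ R*}. If G is monotone in both coordinates and restricts to descendants, then the map H(Y) := LFP(X ↦ G(X, Y)) also restricts to descendants, i.e., for all s ∈ M and Y ⊆ M: s ∈ H(Y) iff s ∈ H(Y ∩ R*[s]). -/

import Mathlib

/-!
The inclusion `H (Y ∩ R*[s]) ⊆ H Y` is monotonicity. For the converse, the set `A` of those `t`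
with `t ∈ H (Y ∩ R*[t])` is a prefixed point of `G (·, Y)`, so it contains `H Y`. Indeed, a
descendant `u ∈ A` of `t` lies in `H (Y ∩ R*[u]) ⊆ H (Y ∩ R*[t])`, so `A ∩ R*[t] ⊆ H (Y ∩ R*[t])`;
hence, if `t ∈ G (A, Y)`, restricting to descendants puts `t` in `G (H (Y ∩ R*[t]), Y ∩ R*[t])`,
which is contained in `H (Y ∩ R*[t])`.
-/

def setLfp {S : Type} (F : Set S → Set S) : Set S :=
  ⋂₀ {X : Set S | F X ⊆ X}

/-- The set of `R*`-descendants of `s` (including `s`). -/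
def desc {M : Type} (R : M → M → Prop) (s : M) : Set M :=
  {t | Relation.ReflTransGen R s t}

section setLfp

variable {S : Type} {F F' : Set S → Set S}

theorem setLfp_subset {X : Set S} (h : F X ⊆ X) : setLfp F ⊆ X :=
  Set.sInter_subset_of_mem h

theorem setLfp_mono (h : ∀ X, F X ⊆ F' X) : setLfp F ⊆ setLfp F' :=
  Set.subset_sInter fun _ hX => setLfp_subset ((h _).trans hX)

theorem map_setLfp_subset (hF : Monotone F) : F (setLfp F) ⊆ setLfp F :=
  Set.subset_sInter fun _ hX => (hF (setLfp_subset hX)).trans hX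

end setLfp

theorem desc_subset_desc {M : Type} {R : M → M → Prop} {s t : M} (h : t ∈ desc R s) :
    desc R t ⊆ desc R s :=
  fun _ hu => h.trans hu

section restrictsToDescendants

variable {M : Type} {R : M → M → Prop} {G : Set M → Set M → Set M}
  (hmono : ∀ X X' Y Y' : Set M, X ⊆ X' → Y ⊆ Y' → G X Y ⊆ G X' Y')

def localLfp (R : M → M → Prop) (G : Set M → Set M → Set M) (Y : Set M) : Set M :=
  {t | t ∈ setLfp fun X => G X (Y ∩ desc R t)}

include hmono in
theorem localLfp_inter_desc_subset (Y : Set M) (t : M) :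
    localLfp R G Y ∩ desc R t ⊆ setLfp fun X => G X (Y ∩ desc R t) :=
  fun _ ⟨hu, htu⟩ => setLfp_mono
    (fun X => hmono X X _ _ le_rfl (Set.inter_subset_inter_right Y (desc_subset_desc htu))) hu

include hmono in
theorem map_localLfp_subset
    (hdesc : ∀ (s : M) (X Y : Set M), s ∈ G X Y ↔ s ∈ G (X ∩ desc R s) (Y ∩ desc R s))
    (Y : Set M) : G (localLfp R G Y) Y ⊆ localLfp R G Y := by
  intro t ht
  have hG : t ∈ G (setLfp fun X => G X (Y ∩ desc R t)) (Y ∩ desc R t) :=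
    hmono _ _ _ _ (localLfp_inter_desc_subset hmono Y t) le_rfl ((hdesc t _ Y).mp ht)
  exact map_setLfp_subset (fun X X' h => hmono X X' _ _ h le_rfl) hG

end restrictsToDescendants

theorem lfp_restricts_to_descendants {M : Type} (R : M → M → Prop)
    (G : Set M → Set M → Set M)
    (hmono : ∀ X X' Y Y' : Set M, X ⊆ X' → Y ⊆ Y' → G X Y ⊆ G X' Y')
    (hdesc : ∀ (s : M) (X Y : Set M),
      s ∈ G X Y ↔ s ∈ G (X ∩ desc R s) (Y ∩ desc R s)) :
    ∀ (s : M) (Y : Set M),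
      s ∈ setLfp (fun X => G X Y) ↔ s ∈ setLfp (fun X => G X (Y ∩ desc R s)) :=
  fun s Y =>
    ⟨fun hs => (setLfp_subset (map_localLfp_subset hmono hdesc Y) hs : s ∈ localLfp R G Y),
      fun hs => setLfp_mono (fun X => hmono X X _ _ le_rfl Set.inter_subset_left) hs⟩
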